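/- Let μ be an offspring distribution on ℤ₊ with mean at most 1, let T be a μ-Galton–Watson tree, and let B ⊂ ℤ₊. Let (S_i) be a random walk started at 0 with i.i.d. increments of law μ(·+1) on {−1,0,1,...}, and let J^B_n = Σ_{k=1}^n 1_{S_k − S_{k−1} + 1 ∈ B}. Then for every n ≥ 1 and k ≥ 0, P(|T| = n, N^B(T) = k) = (1/n)·P(S_n = −1, J^B_n = k), where N^B(T) is the number of vertices of T whose outdegree lies in B. -/

import Mathlib

/-- A finite plane tree: a root together with an ordered list of subtrees. -/
inductive PTree : Type where
  | node : List PTree → PTree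

namespace PTree

-- Number of vertices of a plane tree.
mutual
  def size : PTree → ℕ
    | node ts => 1 + sizeL ts
  def sizeL : List PTree → ℕ
    | [] => 0
    | t :: ts => size t + sizeL ts
end

-- The Galton–Watson weight of a tree: `Π_{u ∈ T} μ(k_u(T))`, so that the law of a
-- `μ`-Galton–Watson tree gives mass `wt μ T` to the tree `T`.
mutual
  def wt (μ : ℕ → ℝ) : PTree → ℝ
    | node ts => μ ts.length * wtL μ ts
  def wtL (μ : ℕ → ℝ) : List PTree → ℝ
    | [] => 1
    | t :: ts => wt μ t * wtL μ ts
end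

-- `N^B(T)`: the number of vertices of `T` whose outdegree lies in `B`.
mutual
  def countB (B : Set ℕ) [DecidablePred (· ∈ B)] : PTree → ℕ
    | node ts => (if ts.length ∈ B then 1 else 0) + countBL B ts
  def countBL (B : Set ℕ) [DecidablePred (· ∈ B)] : List PTree → ℕ
    | [] => 0
    | t :: ts => countB B t + countBL B ts
end

end PTree

namespace Stmt7Aux

def Luka (l : List ℕ) : Prop :=
  l.sum + 1 = l.length ∧ ∀ p : List ℕ, p <+: l → p ≠ l → p.length ≤ p.sum

def LukaL (k : ℕ) (l : List ℕ) : Prop :=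
  l.sum + k = l.length ∧ ∀ p : List ℕ, p <+: l → p ≠ l → p.length < p.sum + k

mutual
  def word : PTree → List ℕ
    | .node ts => ts.length :: wordL ts
  def wordL : List PTree → List ℕ
    | [] => []
    | t :: ts => word t ++ wordL ts
end

mutual
  theorem length_word : ∀ t : PTree, (word t).length = t.size
    | .node ts => by rw [word, PTree.size]; simp [length_wordL ts, Nat.add_comm]
  theorem length_wordL : ∀ ts : List PTree, (wordL ts).length = PTree.sizeL ts
    | [] => by rw [wordL, PTree.sizeL]; rfl
    | t :: ts => by
      rw [wordL, PTree.sizeL]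
      simp [length_word t, length_wordL ts]
end

theorem size_pos : ∀ t : PTree, 1 ≤ t.size
  | .node ts => by rw [PTree.size]; omega

theorem prefix_append_cases {α : Type*} {p w l : List α} (h : p <+: w ++ l) :
    p <+: w ∨ ∃ q, q <+: l ∧ p = w ++ q := by
  rcases le_or_gt p.length w.length with hle | hlt
  · exact Or.inl (List.prefix_of_prefix_length_le h (w.prefix_append l) hle)
  · right
    refine ⟨l.take (p.length - w.length), List.take_prefix _ _, ?_⟩
    have := List.prefix_iff_eq_take.1 h
    rw [List.take_append, List.take_of_length_le (by omega)] at this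
    exact this

theorem lukaL_zero {l : List ℕ} (h : LukaL 0 l) : l = [] := by
  by_contra hne
  have := h.2 [] ⟨l, rfl⟩ (Ne.symm hne)
  simp at this

theorem lukaL_cons {c : ℕ} {l : List ℕ} (h : Luka (c :: l)) : LukaL c l := by
  obtain ⟨h1, h2⟩ := h
  constructor
  · simp [List.sum_cons] at h1 ⊢; omega
  · intro p hp hne
    have := h2 (c :: p) (List.cons_prefix_cons.2 ⟨rfl, hp⟩) (by simpa using hne)
    simp [List.sum_cons] at this; omega

theorem luka_cons {c : ℕ} {l : List ℕ} (h : LukaL c l) : Luka (c :: l) := by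
  obtain ⟨h1, h2⟩ := h
  constructor
  · simp [List.sum_cons]; omega
  · intro p hp hne
    rcases p with _ | ⟨a, q⟩
    · simp
    · rw [List.cons_prefix_cons] at hp
      obtain ⟨rfl, hq⟩ := hp
      have := h2 q hq (by rintro rfl; exact hne rfl)
      simp [List.sum_cons]; omega

theorem lukaL_append {w l : List ℕ} {k : ℕ} (hw : Luka w) (hl : LukaL k l) :
    LukaL (k + 1) (w ++ l) := by
  obtain ⟨hw1, hw2⟩ := hw
  obtain ⟨hl1, hl2⟩ := hl
  constructor
  · simp [List.sum_append]; omega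
  · intro p hp hne
    rcases prefix_append_cases hp with hpw | ⟨q, hq, rfl⟩
    · rcases eq_or_ne p w with rfl | hne'
      · rcases Nat.eq_zero_or_pos k with rfl | hk
        · exact absurd (by simp [lukaL_zero ⟨hl1, hl2⟩]) hne
        · omega
      · have := hw2 p hpw hne'
        have := hpw.length_le
        omega
    · have hqne : q ≠ l := by rintro rfl; exact hne rfl
      have := hl2 q hq hqne
      simp only [List.sum_append, List.length_append]
      omega

mutual
  theorem luka_word : ∀ t : PTree, Luka (word t)
    | .node ts => by
      rw [word]
      exact luka_cons (lukaL_wordL ts)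
  theorem lukaL_wordL : ∀ ts : List PTree, LukaL ts.length (wordL ts)
    | [] => by rw [wordL]; exact ⟨rfl, by simp⟩
    | t :: ts => by
      rw [wordL]
      simpa [Nat.add_comm] using lukaL_append (luka_word t) (lukaL_wordL ts)
end

theorem luka_prefix_eq {u v : List ℕ} (hu : Luka u) (hv : Luka v) (h : u <+: v) : u = v := by
  by_contra hne
  have h1 := hv.2 u h hne
  have h2 := hu.1
  omega

theorem eq_of_append_luka {w w' a a' : List ℕ} (h : w ++ a = w' ++ a')
    (hw : Luka w) (hw' : Luka w') : w = w' := by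
  rcases le_total w.length w'.length with hle | hle
  · exact luka_prefix_eq hw hw'
      (List.prefix_of_prefix_length_le ⟨a, h⟩ ⟨a', rfl⟩ hle)
  · exact (luka_prefix_eq hw' hw
      (List.prefix_of_prefix_length_le ⟨a', h.symm⟩ ⟨a, rfl⟩ hle)).symm

theorem inj_aux : ∀ N : ℕ,
    (∀ t t' : PTree, t.size ≤ N → word t = word t' → t = t') ∧
    (∀ ts ts' : List PTree, PTree.sizeL ts ≤ N → ts.length = ts'.length →
      wordL ts = wordL ts' → ts = ts') := by
  intro N
  induction N using Nat.strong_induction_on with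
  | _ N IH =>
    have htree : ∀ t t' : PTree, t.size ≤ N → word t = word t' → t = t' := by
      rintro ⟨ts⟩ ⟨ts'⟩ hsz heq
      rw [word, word] at heq
      injection heq with h1 h2
      have hsize : PTree.size (.node ts) = 1 + PTree.sizeL ts := by rw [PTree.size]
      have hszl : PTree.sizeL ts < N := by omega
      exact congrArg PTree.node ((IH _ hszl).2 ts ts' le_rfl h1 h2)
    refine ⟨htree, ?_⟩
    rintro (_ | ⟨t, r⟩) (_ | ⟨t', r'⟩) hsz hlen heq
    · rfl
    · simp at hlen
    · simp at hlen
    · rw [wordL, wordL] at heq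
      have hszc : PTree.sizeL (t :: r) = t.size + PTree.sizeL r := by rw [PTree.sizeL]
      have hww' : word t = word t' := eq_of_append_luka heq (luka_word t) (luka_word t')
      have htt' : t = t' := htree t t' (by have := size_pos t; omega) hww'
      rw [hww'] at heq
      have hrr := List.append_cancel_left heq
      have hlen' : r.length = r'.length := by simpa using hlen
      have hszr : PTree.sizeL r < N := by have := size_pos t; omega
      rw [htt', (IH _ hszr).2 r r' le_rfl hlen' hrr]

theorem word_inj {t t' : PTree} (h : word t = word t') : t = t' :=
  (inj_aux t.size).1 t t' le_rfl h

theorem sum_take_mono (l : List ℕ) {i j : ℕ} (h : i ≤ j) :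
    (l.take i).sum ≤ (l.take j).sum := by
  obtain ⟨s, hs⟩ : l.take i <+: l.take j := by rw [List.take_isPrefix_take]; omega
  rw [← hs, List.sum_append]; omega

theorem surjL : ∀ N : ℕ, ∀ l : List ℕ, l.length ≤ N → ∀ k, LukaL k l →
    ∃ ts : List PTree, ts.length = k ∧ wordL ts = l := by
  intro N
  induction N with
  | zero =>
    intro l hl k hk
    have hl0 : l = [] := List.length_eq_zero_iff.1 (Nat.le_zero.1 hl)
    subst hl0
    have : k = 0 := by have := hk.1; simp at this; omega
    subst this
    exact ⟨[], rfl, by rw [wordL]⟩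
  | succ N IH =>
    intro l hl k hk
    match k with
    | 0 =>
      have := lukaL_zero hk
      subst this
      exact ⟨[], rfl, by rw [wordL]⟩
    | k + 1 =>
      have hsum := hk.1
      have hlen1 : 1 ≤ l.length := by omega
      have hex : ∃ m, m ≤ l.length ∧ (l.take m).sum + 1 ≤ m :=
        ⟨l.length, le_rfl, by rw [List.take_length]; omega⟩
      classical
      obtain ⟨m, hmle, hmsum, hmin⟩ :
          ∃ m, m ≤ l.length ∧ (l.take m).sum + 1 ≤ m ∧
            ∀ j < m, ¬(j ≤ l.length ∧ (l.take j).sum + 1 ≤ j) :=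
        ⟨Nat.find hex, (Nat.find_spec hex).1, (Nat.find_spec hex).2,
          fun j hj => Nat.find_min hex hj⟩
      have hge : ∀ j < m, j ≤ (l.take j).sum := by
        intro j hj
        have h1 := hmin j hj
        push_neg at h1
        have := h1 (le_trans hj.le hmle)
        omega
      have hm1 : 1 ≤ m := by
        rcases Nat.eq_zero_or_pos m with h0 | h
        · subst h0; simp at hmsum
        · exact h
      have hwsum : (l.take m).sum + 1 = m := by
        have h1 := hge (m - 1) (by omega)
        have h2 := sum_take_mono l (Nat.sub_le m 1)
        omega
      have hwlen : (l.take m).length = m := by simp [hmle]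
      have hLw : Luka (l.take m) := by
        refine ⟨by omega, ?_⟩
        intro p hp hne
        have hplen : p.length < m := by
          have := hp.length_le
          rcases lt_or_eq_of_le (hwlen ▸ this) with h | h
          · exact h
          · exact absurd (List.IsPrefix.eq_of_length hp (by omega)) hne
        have hptake : p = l.take p.length := by
          have := List.prefix_iff_eq_take.1 hp
          rwa [List.take_take, min_eq_left (by omega)] at this
        have := hge p.length (by omega)
        rwa [← hptake] at this
      have hdropsum : (l.take m).sum + (l.drop m).sum = l.sum := by
        rw [← List.sum_append, List.take_append_drop]
      have hdroplen : (l.drop m).length = l.length - m := by simp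
      have hLr : LukaL k (l.drop m) := by
        refine ⟨by omega, ?_⟩
        intro q hq hqne
        obtain ⟨s, hs⟩ := hq
        have hql : (l.take m) ++ q <+: l := by
          refine ⟨s, ?_⟩
          rw [List.append_assoc, hs, List.take_append_drop]
        have hne' : (l.take m) ++ q ≠ l := by
          intro hcon
          apply hqne
          have h3 : (l.take m) ++ q = (l.take m) ++ l.drop m := by
            rw [hcon, List.take_append_drop]
          exact List.append_cancel_left h3
        have := hk.2 _ hql hne'
        simp only [List.sum_append, List.length_append] at this
        omega
      obtain ⟨c, w', hw'⟩ : ∃ c w', l.take m = c :: w' := by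
        cases h : l.take m with
        | nil => rw [h] at hwlen; simp at hwlen; omega
        | cons c w' => exact ⟨c, w', rfl⟩
      have hLw' : LukaL c w' := lukaL_cons (hw' ▸ hLw)
      have hw'len : w'.length = m - 1 := by
        have h4 : (c :: w').length = m := hw' ▸ hwlen
        simp at h4; omega
      obtain ⟨ts1, hts1len, hts1⟩ := IH w' (by omega) c hLw'
      obtain ⟨ts2, hts2len, hts2⟩ := IH (l.drop m) (by omega) k hLr
      refine ⟨PTree.node ts1 :: ts2, by simp [hts2len], ?_⟩
      rw [wordL, word, hts1, hts2, hts1len, ← hw', List.take_append_drop]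

theorem luka_surj {l : List ℕ} (h : Luka l) : ∃ t : PTree, word t = l := by
  obtain ⟨c, l', rfl⟩ : ∃ c l', l = c :: l' := by
    cases l with
    | nil => have := h.1; simp at this
    | cons c l' => exact ⟨c, l', rfl⟩
  obtain ⟨ts, htslen, hts⟩ := surjL l'.length l' le_rfl c (lukaL_cons h)
  exact ⟨PTree.node ts, by rw [word, hts, htslen]⟩

open Classical in
noncomputable def parse (l : List ℕ) : PTree :=
  if h : ∃ t : PTree, word t = l then h.choose else .node []

theorem word_parse {l : List ℕ} (h : Luka l) : word (parse l) = l := by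
  rw [parse]
  rw [dif_pos (luka_surj h)]
  exact (luka_surj h).choose_spec

theorem parse_word (t : PTree) : parse (word t) = t := by
  have hex : ∃ t' : PTree, word t' = word t := ⟨t, rfl⟩
  rw [parse]
  rw [dif_pos hex]
  exact word_inj hex.choose_spec




mutual
  theorem prod_word (μ : ℕ → ℝ) : ∀ t : PTree, ((word t).map μ).prod = PTree.wt μ t
    | .node ts => by rw [word, PTree.wt]; simp [prod_wordL μ ts]
  theorem prod_wordL (μ : ℕ → ℝ) : ∀ ts : List PTree, ((wordL ts).map μ).prod = PTree.wtL μ ts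
    | [] => by rw [wordL, PTree.wtL]; rfl
    | t :: ts => by
      rw [wordL, PTree.wtL]
      simp [prod_word μ t, prod_wordL μ ts]
end

mutual
  theorem countP_word (B : Set ℕ) [DecidablePred (· ∈ B)] :
      ∀ t : PTree, (word t).countP (fun x => decide (x ∈ B)) = PTree.countB B t
    | .node ts => by
      rw [word, PTree.countB]
      simp only [List.countP_cons, countP_wordL B ts]
      by_cases h : ts.length ∈ B <;> simp [h, Nat.add_comm]
  theorem countP_wordL (B : Set ℕ) [DecidablePred (· ∈ B)] :
      ∀ ts : List PTree, (wordL ts).countP (fun x => decide (x ∈ B)) = PTree.countBL B ts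
    | [] => by rw [wordL, PTree.countBL]; rfl
    | t :: ts => by
      rw [wordL, PTree.countBL]
      simp [List.countP_append, countP_word B t, countP_wordL B ts]
end



theorem sum_take_eq (l : List ℕ) (j : ℕ) :
    (l.take j).sum = ∑ i ∈ Finset.range j, l.getD i 0 := by
  induction j with
  | zero => simp
  | succ j ih =>
    rw [List.take_succ, List.sum_append, ih, Finset.sum_range_succ]
    congr 1
    by_cases h : j < l.length
    · simp [List.getElem?_eq_getElem h, List.getD_eq_getElem l 0 h]
    · simp [List.getElem?_eq_none (le_of_not_gt h), List.getD_eq_default l 0 (le_of_not_gt h)]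

theorem window_sum {M : Type*} [AddCommMonoid M] (f : ℕ → M) (n : ℕ) (hn : 1 ≤ n) (j : ℕ) :
    ∑ i ∈ Finset.Ico j (j + n), f (i % n) = ∑ i ∈ Finset.range n, f i := by
  induction j with
  | zero =>
    simp only [Nat.zero_add, Finset.range_eq_Ico]
    exact Finset.sum_congr rfl fun i hi => by
      rw [Nat.mod_eq_of_lt (Finset.mem_Ico.1 hi).2]
  | succ j ih =>
    have h1 : j + 1 + n = (j + n) + 1 := by omega
    rw [h1, Finset.sum_Ico_succ_top (by omega), Nat.add_mod_right]
    conv_rhs => rw [← ih, Finset.sum_eq_sum_Ico_succ_bot (show j < j + n by omega)]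
    exact add_comm _ _

/-- The infinite Łukasiewicz walk obtained by repeating the step list `c` periodically. -/
noncomputable def gwalk (c : List ℕ) (j : ℕ) : ℤ :=
  (∑ i ∈ Finset.range j, (c.getD (i % c.length) 0 : ℤ)) - j

theorem sum_range_getD (c : List ℕ) :
    ∑ i ∈ Finset.range c.length, c.getD i 0 = c.sum := by
  rw [← sum_take_eq, List.take_length]

theorem gwalk_zero (c : List ℕ) : gwalk c 0 = 0 := by simp [gwalk]

theorem gwalk_add_length {c : List ℕ} (hn : 1 ≤ c.length) (hsum : c.sum + 1 = c.length)
    (j : ℕ) : gwalk c (j + c.length) = gwalk c j - 1 := by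
  unfold gwalk
  rw [Finset.range_eq_Ico, ← Finset.sum_Ico_consecutive _ (Nat.zero_le j) (by omega : j ≤ j + c.length)]
  rw [window_sum (fun i => (c.getD i 0 : ℤ)) c.length hn j]
  have h2 : ∑ i ∈ Finset.range c.length, (c.getD i 0 : ℤ) = (c.sum : ℤ) := by
    rw [← Nat.cast_sum, sum_range_getD]
  rw [← Finset.range_eq_Ico, h2]
  have hsum' : (c.sum : ℤ) + 1 = (c.length : ℤ) := by exact_mod_cast hsum
  push_cast [← hsum']
  ring

theorem luka_iff_take {l : List ℕ} :
    Luka l ↔ l.sum + 1 = l.length ∧ ∀ j < l.length, j ≤ (l.take j).sum := by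
  constructor
  · rintro ⟨h1, h2⟩
    refine ⟨h1, fun j hj => ?_⟩
    have := h2 (l.take j) (List.take_prefix j l)
      (fun hc => absurd (congrArg List.length hc) (by rw [List.length_take]; omega))
    rwa [List.length_take, min_eq_left hj.le] at this
  · rintro ⟨h1, h2⟩
    refine ⟨h1, fun p hp hne => ?_⟩
    have hplen : p.length < l.length := by
      rcases lt_or_eq_of_le hp.length_le with h | h
      · exact h
      · exact absurd (List.IsPrefix.eq_of_length hp h) hne
    have hptake : p = l.take p.length := List.prefix_iff_eq_take.1 hp
    have := h2 p.length hplen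
    rwa [← hptake] at this

theorem rotate_take_sum {c : List ℕ} {m : ℕ} (hm : m < c.length) {j : ℕ} (hj : j ≤ c.length) :
    (((c.rotate m).take j).sum : ℤ) = gwalk c (m + j) - gwalk c m + j := by
  have hrl : (c.rotate m).length = c.length := List.length_rotate c m
  have h1 : ((c.rotate m).take j).sum = ∑ i ∈ Finset.range j, (c.rotate m).getD i 0 :=
    sum_take_eq _ j
  have h2 : ∀ i < j, (c.rotate m).getD i 0 = c.getD ((i + m) % c.length) 0 := by
    intro i hi
    have hi' : i < (c.rotate m).length := by omega
    rw [List.getD_eq_getElem _ 0 hi']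
    have := List.get_rotate c m ⟨i, hi'⟩
    simp only [List.get_eq_getElem] at this
    rw [this, List.getD_eq_getElem _ 0 (Nat.mod_lt _ (by omega))]
  have h3 : ((c.rotate m).take j).sum = ∑ i ∈ Finset.range j, c.getD ((i + m) % c.length) 0 := by
    rw [h1]; exact Finset.sum_congr rfl fun i hi => h2 i (Finset.mem_range.1 hi)
  -- gwalk difference
  have h4 : gwalk c (m + j) - gwalk c m
      = (∑ i ∈ Finset.Ico m (m + j), (c.getD (i % c.length) 0 : ℤ)) - j := by
    unfold gwalk
    rw [Finset.range_eq_Ico, ← Finset.sum_Ico_consecutive _ (Nat.zero_le m) (by omega : m ≤ m + j),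
      ← Finset.range_eq_Ico]
    push_cast
    ring
  have h6 : ∑ i ∈ Finset.range j, (c.getD ((m + i) % c.length) 0 : ℤ)
      = ∑ i ∈ Finset.range j, (c.getD ((i + m) % c.length) 0 : ℤ) :=
    Finset.sum_congr rfl fun i _ => by rw [Nat.add_comm m i]
  rw [h4, Finset.sum_Ico_eq_sum_range]
  simp only [Nat.add_sub_cancel_left]
  rw [h6, h3]
  push_cast
  ring

theorem luka_rotate_iff {c : List ℕ} (hn : 1 ≤ c.length) (hsum : c.sum + 1 = c.length)
    {m : ℕ} (hm : m < c.length) :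
    Luka (c.rotate m) ↔ ∀ j < c.length, gwalk c m ≤ gwalk c (m + j) := by
  have hrl : (c.rotate m).length = c.length := List.length_rotate c m
  have hrs : (c.rotate m).sum = c.sum := (List.rotate_perm c m).sum_eq
  rw [luka_iff_take, hrl, hrs]
  constructor
  · rintro ⟨-, h2⟩ j hj
    have := h2 j hj
    have hts := rotate_take_sum hm (le_of_lt hj)
    omega
  · intro h
    refine ⟨by omega, fun j hj => ?_⟩
    have := h j hj
    have hts := rotate_take_sum hm (le_of_lt hj)
    omega

theorem cycle_lemma {c : List ℕ} (hn : 1 ≤ c.length) (hsum : c.sum + 1 = c.length) :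
    ∃! m, m < c.length ∧ Luka (c.rotate m) := by
  classical
  set n := c.length with hndef
  set g := gwalk c with hgdef
  have hper : ∀ j, g (j + n) = g j - 1 := gwalk_add_length hn hsum
  -- first argmin
  obtain ⟨m1, hm1mem, hm1min⟩ :=
    Finset.exists_min_image (Finset.range n) g ⟨0, Finset.mem_range.2 (by omega)⟩
  have hPex : ∃ m, m < n ∧ ∀ j < n, g m ≤ g j :=
    ⟨m1, Finset.mem_range.1 hm1mem, fun j hj => hm1min j (Finset.mem_range.2 hj)⟩
  obtain ⟨m, hmn, hmmin, hmfirst⟩ :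
      ∃ m, m < n ∧ (∀ j < n, g m ≤ g j) ∧ ∀ i < m, ¬(i < n ∧ ∀ j < n, g i ≤ g j) :=
    ⟨Nat.find hPex, (Nat.find_spec hPex).1, (Nat.find_spec hPex).2,
      fun i hi => Nat.find_min hPex hi⟩
  have hstrict : ∀ i < m, g m < g i := by
    intro i hi
    have h1 := hmfirst i hi
    push_neg at h1
    obtain ⟨j, hj, hgj⟩ := h1 (by omega)
    exact lt_of_le_of_lt (hmmin j hj) hgj
  have hC : ∀ j < n, g m ≤ g (m + j) := by
    intro j hj
    rcases lt_or_ge (m + j) n with h | h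
    · exact hmmin _ h
    · have h1 : m + j = (m + j - n) + n := by omega
      have h2 : m + j - n < m := by omega
      rw [h1, hper]
      have := hstrict _ h2
      omega
  refine ⟨m, ⟨hmn, (luka_rotate_iff hn hsum hmn).2 hC⟩, ?_⟩
  -- uniqueness
  have key : ∀ a b, a < b → b < n →
      (∀ j < n, g a ≤ g (a + j)) → (∀ j < n, g b ≤ g (b + j)) → False := by
    intro a b hab hbn hCa hCb
    have h1 : g a ≤ g b := by
      have := hCa (b - a) (by omega)
      rwa [Nat.add_sub_cancel' (le_of_lt hab)] at this
    have h2 : g b ≤ g (a + n) := by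
      have := hCb (a + n - b) (by omega)
      rwa [Nat.add_sub_cancel' (by omega : b ≤ a + n)] at this
    rw [Nat.add_comm a n, Nat.add_comm] at h2
    rw [hper] at h2
    omega
  rintro m' ⟨hm'n, hm'luka⟩
  have hCm' := (luka_rotate_iff hn hsum hm'n).1 hm'luka
  rcases lt_trichotomy m' m with h | h | h
  · exact absurd (key m' m h hmn hCm' hC) not_false
  · exact h
  · exact absurd (key m m' h hm'n hC hCm') not_false


def AW (n : ℕ) : Finset (List ℕ) :=
  (Fintype.piFinset fun _ : Fin n => Finset.range n).image List.ofFn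

theorem mem_AW {n : ℕ} {l : List ℕ} : l ∈ AW n ↔ l.length = n ∧ ∀ x ∈ l, x < n := by
  constructor
  · intro h
    rw [AW, Finset.mem_image] at h
    obtain ⟨c, hc, rfl⟩ := h
    refine ⟨List.length_ofFn, fun x hx => ?_⟩
    rw [List.mem_ofFn] at hx
    obtain ⟨i, rfl⟩ := hx
    exact Finset.mem_range.1 (Fintype.mem_piFinset.1 hc i)
  · rintro ⟨hlen, hx⟩
    rw [AW, Finset.mem_image]
    refine ⟨fun i : Fin n => l.getD i 0, ?_, ?_⟩
    · rw [Fintype.mem_piFinset]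
      intro i
      rw [Finset.mem_range]
      have hi : (i : ℕ) < l.length := by rw [hlen]; exact i.2
      rw [List.getD_eq_getElem l 0 hi]
      exact hx _ (List.getElem_mem hi)
    · apply List.ext_getElem (by simp [hlen])
      intro i h1 h2
      rw [List.getElem_ofFn]
      simp [List.getD_eq_getElem l 0 h2, List.getElem?_eq_getElem h2]

theorem countP_eq_sum_map (l : List ℕ) (p : ℕ → Bool) :
    l.countP p = (l.map fun x => if p x then 1 else 0).sum := by
  induction l with
  | nil => rfl
  | cons a l ih => rw [List.countP_cons, List.map_cons, List.sum_cons, ih]; omega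

theorem countP_ofFn {n : ℕ} (c : Fin n → ℕ) (B : Set ℕ) [DecidablePred (· ∈ B)] :
    (List.ofFn c).countP (fun x => decide (x ∈ B))
      = (Finset.univ.filter fun i => c i ∈ B).card := by
  rw [countP_eq_sum_map, List.map_ofFn, List.sum_ofFn, Finset.card_filter]
  exact Finset.sum_congr rfl fun i _ => by simp [Function.comp]

end Stmt7Aux

/-- Let `μ` be an offspring distribution with mean at most `1`, `T` a
`μ`-Galton–Watson tree and `B ⊆ ℕ`. Then for every `n ≥ 1` and `k ≥ 0`,
`P(|T| = n, N^B(T) = k) = (1/n) P(S_n = −1, J^B_n = k)`, where `S` is the random walk with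
i.i.d. increments of law `μ(· + 1)` (i.e. steps `c − 1` with `c ∼ μ`) and `J^B_n` counts
the steps whose increment plus one lies in `B`. Both sides are written as sums of the
corresponding weights (over trees on the left, over step sequences `c : Fin n → ℕ` on the
right, where `S_n = −1` reads `Σ c_i = n − 1`). -/
theorem stmt_7 (μ : ℕ → ℝ) (hnonneg : ∀ i, 0 ≤ μ i)
    (hsummable : Summable μ) (htotal : ∑' i, μ i = 1)
    (hmean_summable : Summable fun i : ℕ => (i : ℝ) * μ i)
    (hmean : ∑' i : ℕ, (i : ℝ) * μ i ≤ 1)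
    (B : Set ℕ) [DecidablePred (· ∈ B)]
    (n k : ℕ) (hn : 1 ≤ n) :
    (n : ℝ) * (∑' T : PTree, if T.size = n ∧ PTree.countB B T = k then PTree.wt μ T else 0)
      = ∑' c : Fin n → ℕ,
          if (∑ i, c i) = n - 1 ∧ (Finset.univ.filter fun i => c i ∈ B).card = k then
            ∏ i, μ (c i)
          else 0 := by
  classical
  -- notation
  set p : ℕ → Bool := fun x => decide (x ∈ B) with hp
  set F : (Fin n → ℕ) → ℝ := fun c =>
    if (∑ i, c i) = n - 1 ∧ (Finset.univ.filter fun i => c i ∈ B).card = k then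
      ∏ i, μ (c i) else 0 with hF
  set f : PTree → ℝ := fun T =>
    if T.size = n ∧ PTree.countB B T = k then PTree.wt μ T else 0 with hf
  set G : List ℕ → ℝ := fun l =>
    if l.sum = n - 1 ∧ l.countP p = k then (l.map μ).prod else 0 with hG
  set g : List ℕ → ℝ := fun l =>
    if Stmt7Aux.Luka l ∧ l.countP p = k then (l.map μ).prod else 0 with hg
  set A : Finset (List ℕ) := Stmt7Aux.AW n with hA
  set Cfin : Finset (Fin n → ℕ) := Fintype.piFinset fun _ : Fin n => Finset.range n with hC
  set Tfin : Finset PTree := A.image Stmt7Aux.parse with hTfin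
  -- generic facts about trees with nonzero weight
  have hword_mem : ∀ T : PTree, f T ≠ 0 → Stmt7Aux.word T ∈ A := by
    intro T hT
    simp only [hf] at hT
    by_cases hcond : T.size = n ∧ PTree.countB B T = k
    · have hlen : (Stmt7Aux.word T).length = n := by
        rw [Stmt7Aux.length_word]; exact hcond.1
      have hsum : (Stmt7Aux.word T).sum + 1 = n := by
        have := (Stmt7Aux.luka_word T).1
        omega
      rw [hA]
      rw [Stmt7Aux.mem_AW]
      refine ⟨hlen, fun x hx => ?_⟩
      have := List.single_le_sum (l := Stmt7Aux.word T) (fun y _ => Nat.zero_le y) x hx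
      omega
    · simp [hcond] at hT
  -- Step 1 : LHS tsum over trees is a finite sum
  have step1 : ∑' T : PTree, f T = ∑ T ∈ Tfin, f T := by
    apply tsum_eq_sum
    intro T hT
    by_contra hne
    apply hT
    rw [hTfin]
    apply Finset.mem_image.2
    exact ⟨Stmt7Aux.word T, hword_mem T hne, Stmt7Aux.parse_word T⟩
  -- Step 2 : from trees to Łukasiewicz words
  have step2 : ∑ l ∈ A, g l = ∑ T ∈ Tfin, f T := by
    apply Finset.sum_bij_ne_zero (fun l _ _ => Stmt7Aux.parse l)
    · intro l h1 h2
      rw [hTfin]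
      exact Finset.mem_image.2 ⟨l, h1, rfl⟩
    · intro l1 h11 h12 l2 h21 h22 heq
      have e1 : Stmt7Aux.Luka l1 := by
        simp only [hg] at h12; by_cases h : Stmt7Aux.Luka l1 ∧ l1.countP p = k
        · exact h.1
        · simp [h] at h12
      have e2 : Stmt7Aux.Luka l2 := by
        simp only [hg] at h22; by_cases h : Stmt7Aux.Luka l2 ∧ l2.countP p = k
        · exact h.1
        · simp [h] at h22
      rw [← Stmt7Aux.word_parse e1, ← Stmt7Aux.word_parse e2, heq]
    · intro T hTmem hTne
      refine ⟨Stmt7Aux.word T, hword_mem T hTne, ?_, Stmt7Aux.parse_word T⟩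
      simp only [hf] at hTne
      by_cases hcond : T.size = n ∧ PTree.countB B T = k
      · simp only [hg]
        have : (Stmt7Aux.word T).countP p = k := by
          simp only [hp]; rw [ Stmt7Aux.countP_word]; exact hcond.2
        rw [if_pos ⟨Stmt7Aux.luka_word T, this⟩, Stmt7Aux.prod_word]
        simpa [hcond] using hTne
      · simp [hcond] at hTne
    · intro l hmem hne
      have e1 : Stmt7Aux.Luka l ∧ l.countP p = k := by
        simp only [hg] at hne; by_cases h : Stmt7Aux.Luka l ∧ l.countP p = k
        · exact h
        · simp [h] at hne
      have hw : Stmt7Aux.word (Stmt7Aux.parse l) = l := Stmt7Aux.word_parse e1.1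
      have hsize : (Stmt7Aux.parse l).size = n := by
        rw [← Stmt7Aux.length_word, hw]
        exact (Stmt7Aux.mem_AW.1 (hA ▸ hmem)).1
      have hcnt : PTree.countB B (Stmt7Aux.parse l) = k := by
        rw [← Stmt7Aux.countP_word B (Stmt7Aux.parse l), hw]
        exact e1.2
      simp only [hg, hf]
      rw [if_pos e1, if_pos ⟨hsize, hcnt⟩, ← Stmt7Aux.prod_word μ, hw]
  -- Step 3 : cycle lemma, from Łukasiewicz words to all step words
  have step3 : (n : ℝ) * ∑ l ∈ A, g l = ∑ l ∈ A, G l := by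
    have expand : (n : ℝ) * ∑ l ∈ A, g l = ∑ q ∈ A ×ˢ Finset.range n, g q.1 := by
      rw [Finset.sum_product, Finset.mul_sum]
      refine Finset.sum_congr rfl fun l _ => ?_
      show (n : ℝ) * g l = ∑ _y ∈ Finset.range n, g l
      rw [Finset.sum_const, Finset.card_range, nsmul_eq_mul]
    rw [expand]
    apply Finset.sum_bij_ne_zero (fun q _ _ => q.1.rotate q.2)
    · intro q hq hne
      obtain ⟨hq1, hq2⟩ := Finset.mem_product.1 hq
      rw [hA, Stmt7Aux.mem_AW] at hq1 ⊢
      refine ⟨by rw [List.length_rotate]; exact hq1.1, fun x hx => ?_⟩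
      exact hq1.2 x ((List.rotate_perm q.1 q.2).subset hx)
    · rintro ⟨l1, j1⟩ hq1 hne1 ⟨l2, j2⟩ hq2 hne2 heq
      simp only at heq
      have hm1 : l1 ∈ A := (Finset.mem_product.1 hq1).1
      have hj1 : j1 < n := Finset.mem_range.1 (Finset.mem_product.1 hq1).2
      have hm2 : l2 ∈ A := (Finset.mem_product.1 hq2).1
      have hj2 : j2 < n := Finset.mem_range.1 (Finset.mem_product.1 hq2).2
      obtain ⟨hlen1, -⟩ := Stmt7Aux.mem_AW.1 (hA ▸ hm1)
      obtain ⟨hlen2, -⟩ := Stmt7Aux.mem_AW.1 (hA ▸ hm2)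
      have e1 : Stmt7Aux.Luka l1 := by
        simp only [hg] at hne1; by_cases h : Stmt7Aux.Luka l1 ∧ l1.countP p = k
        · exact h.1
        · simp [h] at hne1
      have e2 : Stmt7Aux.Luka l2 := by
        simp only [hg] at hne2; by_cases h : Stmt7Aux.Luka l2 ∧ l2.countP p = k
        · exact h.1
        · simp [h] at hne2
      -- l2 = l1.rotate (j1 + (n - j2))
      have hrot : l1.rotate (j1 + (n - j2)) = l2 := by
        have h1 : (l1.rotate j1).rotate (n - j2) = l1.rotate (j1 + (n - j2)) :=
          List.rotate_rotate l1 j1 (n - j2)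
        have h2 : (l2.rotate j2).rotate (n - j2) = l2.rotate n := by
          rw [List.rotate_rotate]
          congr 1
          omega
        rw [← h1, heq, h2, ← hlen2, List.rotate_length]
      have hsum1 : l1.sum + 1 = l1.length := e1.1
      obtain ⟨m0, hm0, huniq⟩ := Stmt7Aux.cycle_lemma (by omega) hsum1
      have hz : (0 : ℕ) = m0 := huniq 0 ⟨by omega, by rw [List.rotate_zero]; exact e1⟩
      have hd : (j1 + (n - j2)) % l1.length = m0 := by
        apply huniq
        constructor
        · exact Nat.mod_lt _ (by omega)
        · rw [List.rotate_mod, hrot]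
          exact e2
      rw [hlen1] at hd
      have hj12 : j1 = j2 := by
        rw [← hz] at hd
        rcases Nat.lt_or_ge (j1 + (n - j2)) n with hlt | hge
        · rw [Nat.mod_eq_of_lt hlt] at hd; omega
        · rw [Nat.mod_eq_sub_mod hge, Nat.mod_eq_of_lt (by omega)] at hd; omega
      have hl12 : l1 = l2 := by
        have hn' : j1 + (n - j2) = n := by omega
        rw [← hrot, hn', ← hlen1, List.rotate_length]
      rw [hj12, hl12]
    · intro b hb hbne
      have e1 : b.sum = n - 1 ∧ b.countP p = k := by
        simp only [hG] at hbne; by_cases h : b.sum = n - 1 ∧ b.countP p = k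
        · exact h
        · simp [h] at hbne
      obtain ⟨hlenb, -⟩ := Stmt7Aux.mem_AW.1 (hA ▸ hb)
      have hsumb : b.sum + 1 = b.length := by omega
      obtain ⟨m0, ⟨hm0lt, hm0luka⟩, -⟩ := Stmt7Aux.cycle_lemma (by omega) hsumb
      refine ⟨(b.rotate m0, (n - m0) % n), ?_, ?_, ?_⟩
      · apply Finset.mem_product.2
        constructor
        · rw [hA, Stmt7Aux.mem_AW] at hb ⊢
          exact ⟨by rw [List.length_rotate]; exact hb.1,
            fun x hx => hb.2 x ((List.rotate_perm b m0).subset hx)⟩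
        · exact Finset.mem_range.2 (Nat.mod_lt _ (by omega))
      · simp only [hg]
        have hcnt : (b.rotate m0).countP p = k := by
          rw [(List.rotate_perm b m0).countP_eq]; exact e1.2
        rw [if_pos ⟨hm0luka, hcnt⟩]
        have : ((b.rotate m0).map μ).prod = (b.map μ).prod :=
          ((List.rotate_perm b m0).map μ).prod_eq
        rw [this]
        simp only [hG] at hbne
        rw [if_pos e1] at hbne
        exact hbne
      · show (b.rotate m0).rotate ((n - m0) % n) = b
        rw [List.rotate_rotate]
        rcases Nat.eq_zero_or_pos m0 with h0 | hpos
        · subst h0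
          simp only [Nat.zero_add, Nat.sub_zero, Nat.mod_self]
          exact List.rotate_zero b
        · have : m0 + (n - m0) % n = n := by
            have h1 : (n - m0) % n = n - m0 := Nat.mod_eq_of_lt (by omega)
            omega
          rw [this, ← hlenb, List.rotate_length]
    · rintro ⟨l, j⟩ hq hne
      have hm1 : l ∈ A := (Finset.mem_product.1 hq).1
      obtain ⟨hlen1, -⟩ := Stmt7Aux.mem_AW.1 (hA ▸ hm1)
      have e1 : Stmt7Aux.Luka l ∧ l.countP p = k := by
        simp only [hg] at hne; by_cases h : Stmt7Aux.Luka l ∧ l.countP p = k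
        · exact h
        · simp [h] at hne
      have hsuml : l.sum + 1 = l.length := e1.1.1
      have hsrot : (l.rotate j).sum = n - 1 := by
        rw [(List.rotate_perm l j).sum_eq]
        omega
      have hcrot : (l.rotate j).countP p = k := by
        rw [(List.rotate_perm l j).countP_eq]; exact e1.2
      show g l = G (l.rotate j)
      simp only [hg, hG]
      rw [if_pos e1, if_pos ⟨hsrot, hcrot⟩]
      exact (((List.rotate_perm l j).map μ).prod_eq).symm
  -- Step 4 : from lists to functions
  have step4 : ∑ l ∈ A, G l = ∑ c ∈ Cfin, F c := by
    have himg : A = Cfin.image List.ofFn := by rw [hA, Stmt7Aux.AW, hC]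
    rw [himg, Finset.sum_image (fun x _ y _ h => List.ofFn_inj.1 h)]
    apply Finset.sum_congr rfl
    intro c _
    simp only [hG]; rw [ hF, List.sum_ofFn, hp, Stmt7Aux.countP_ofFn, List.map_ofFn, List.prod_ofFn]
    rfl
  -- Step 5 : RHS tsum is the finite sum
  have step5 : ∑' c : Fin n → ℕ, F c = ∑ c ∈ Cfin, F c := by
    apply tsum_eq_sum
    intro c hc
    by_contra hne
    apply hc
    rw [hC, Fintype.mem_piFinset]
    intro i
    rw [Finset.mem_range]
    by_cases hcond : (∑ i, c i) = n - 1 ∧ (Finset.univ.filter fun i => c i ∈ B).card = k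
    · have := Finset.single_le_sum (f := c) (fun j _ => Nat.zero_le (c j)) (Finset.mem_univ i)
      omega
    · simp only [hF] at hne
      simp [hcond] at hne
  calc (n : ℝ) * ∑' T : PTree, f T
      = (n : ℝ) * ∑ T ∈ Tfin, f T := by rw [step1]
    _ = (n : ℝ) * ∑ l ∈ A, g l := by rw [step2]
    _ = ∑ l ∈ A, G l := step3
    _ = ∑ c ∈ Cfin, F c := step4
    _ = ∑' c : Fin n → ℕ, F c := step5.symm
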